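/- Let P1 and P2 be paths on the triangular grid, each with exactly one bend, such that E(P1) ∩ E(P2) ≠ ∅. Then either there is a single segment s of P1 or of P2 whose edge set contains E(P1) ∩ E(P2), or P1 and P2 have the same bend point b and the two edges of P1 incident to b coincide with the two edges of P2 incident to b (so P1 and P2 are 1-bend paths of the same type bending at the same point). -/

import Mathlib

/-- The triangular grid: the simple graph on `ℤ × ℤ` where two points are adjacent
iff their difference is `±(1,0)`, `±(0,1)` or `±(1,1)`. -/
def TGrid : SimpleGraph (ℤ × ℤ) where
  Adj u v :=
    (v.1 - u.1 = 1 ∧ v.2 - u.2 = 0) ∨ (v.1 - u.1 = -1 ∧ v.2 - u.2 = 0) ∨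
    (v.1 - u.1 = 0 ∧ v.2 - u.2 = 1) ∨ (v.1 - u.1 = 0 ∧ v.2 - u.2 = -1) ∨
    (v.1 - u.1 = 1 ∧ v.2 - u.2 = 1) ∨ (v.1 - u.1 = -1 ∧ v.2 - u.2 = -1)
  symm := ⟨fun u v h => by omega⟩
  loopless := ⟨fun u h => by omega⟩

/-- The (symmetric) direction datum of a grid edge: the pair of absolute coordinate
differences.  For grid edges this is `(1,0)` (horizontal), `(0,1)` (vertical) or
`(1,1)` (diagonal). -/
def edir (e : Sym2 (ℤ × ℤ)) : ℤ × ℤ :=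
  Sym2.lift ⟨fun u v => (|u.1 - v.1|, |u.2 - v.2|), by
    intro u v; simp [abs_sub_comm]⟩ e

/-- The `t`-th edge of a walk. -/
def wEdge {u v : ℤ × ℤ} (p : TGrid.Walk u v) (t : ℕ) : Sym2 (ℤ × ℤ) :=
  s(p.getVert t, p.getVert (t + 1))

/-- The number of bends of a walk: the number of consecutive pairs of edges with
different directions. -/
def bendCount {u v : ℤ × ℤ} (p : TGrid.Walk u v) : ℕ :=
  (List.range (p.length - 1)).countP
    (fun i => decide (edir (wEdge p i) ≠ edir (wEdge p (i + 1))))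

/-- `b` is a bend point of the walk `p`. -/
def IsBendAt {u v : ℤ × ℤ} (p : TGrid.Walk u v) (b : ℤ × ℤ) : Prop :=
  ∃ i : ℕ, i + 2 ≤ p.length ∧ p.getVert (i + 1) = b ∧
    edir (wEdge p i) ≠ edir (wEdge p (i + 1))

/-- A (nontrivial simple) path on the triangular grid. -/
structure TPath where
  src : ℤ × ℤ
  dst : ℤ × ℤ
  walk : TGrid.Walk src dst
  isPath : walk.IsPath
  nontriv : 0 < walk.length

/-- The set of grid edges of a path. -/
def pEdges (P : TPath) : Set (Sym2 (ℤ × ℤ)) := {e | e ∈ P.walk.edges}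

/-- The set of grid points of a path. -/
def pPts (P : TPath) : Set (ℤ × ℤ) := {q | q ∈ P.walk.support}

/-- A segment of a path: a maximal straight (bend-free) subpath, recorded by the
interval of edge indices `[i, j)` it occupies. -/
structure Segment (P : TPath) where
  i : ℕ
  j : ℕ
  lt : i < j
  le : j ≤ P.walk.length
  straight : ∀ t, i ≤ t → t < j → edir (wEdge P.walk t) = edir (wEdge P.walk i)
  maxLeft : i = 0 ∨ edir (wEdge P.walk (i - 1)) ≠ edir (wEdge P.walk i)
  maxRight : j = P.walk.length ∨ edir (wEdge P.walk (j - 1)) ≠ edir (wEdge P.walk j)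

/-- The set of grid edges of a segment. -/
def Segment.edges {P : TPath} (s : Segment P) : Set (Sym2 (ℤ × ℤ)) :=
  {e | ∃ t, s.i ≤ t ∧ t < s.j ∧ e = wEdge P.walk t}

/-- The set of grid points of a segment. -/
def Segment.pts {P : TPath} (s : Segment P) : Set (ℤ × ℤ) :=
  {q | ∃ t, s.i ≤ t ∧ t ≤ s.j ∧ q = P.walk.getVert t}

/-- The direction of a segment. -/
def Segment.dir {P : TPath} (s : Segment P) : ℤ × ℤ := edir (wEdge P.walk s.i)

/-- The three directions of the triangular grid. -/
inductive Dir | H | V | D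
deriving DecidableEq

/-- The direction of the (straight) line from `a` to `b`. -/
def dirOf (a b : ℤ × ℤ) : Dir :=
  if a.2 = b.2 then .H else if a.1 = b.1 then .V else .D

/-- A grid line of the triangular grid: a full horizontal, vertical or diagonal line. -/
structure GridLine where
  dir : Dir
  c : ℤ

/-- The parametrization of the points of a grid line. -/
def GridLine.pt (l : GridLine) (t : ℤ) : ℤ × ℤ :=
  match l.dir with
  | .H => (t, l.c)
  | .V => (l.c, t)
  | .D => (l.c + t, t)

/-- The `t`-th edge of a grid line. -/
def GridLine.edge (l : GridLine) (t : ℤ) : Sym2 (ℤ × ℤ) := s(l.pt t, l.pt (t + 1))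

/-- The set of grid points of a grid line. -/
def GridLine.pts (l : GridLine) : Set (ℤ × ℤ) := Set.range l.pt

/-- The set of grid edges of a grid line. -/
def GridLine.edges (l : GridLine) : Set (Sym2 (ℤ × ℤ)) := Set.range l.edge

/-- A right triangle of the triangular grid, given by a base corner `p`, a leg
length `k ≥ 1`, and one of the two possible orientations. -/
structure RightTri where
  p : ℤ × ℤ
  k : ℤ
  hk : 1 ≤ k
  orientA : Bool

/-- The set of grid edges of a right triangle. -/
def RightTri.edges (T : RightTri) : Set (Sym2 (ℤ × ℤ)) :=
  if T.orientA then
    {e | ∃ t : ℤ, 0 ≤ t ∧ t < T.k ∧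
      (e = s((T.p.1 + t, T.p.2), (T.p.1 + t + 1, T.p.2)) ∨
       e = s((T.p.1 + T.k, T.p.2 + t), (T.p.1 + T.k, T.p.2 + t + 1)) ∨
       e = s((T.p.1 + t, T.p.2 + t), (T.p.1 + t + 1, T.p.2 + t + 1)))}
  else
    {e | ∃ t : ℤ, 0 ≤ t ∧ t < T.k ∧
      (e = s((T.p.1, T.p.2 + t), (T.p.1, T.p.2 + t + 1)) ∨
       e = s((T.p.1 + t, T.p.2 + T.k), (T.p.1 + t + 1, T.p.2 + T.k)) ∨
       e = s((T.p.1 + t, T.p.2 + t), (T.p.1 + t + 1, T.p.2 + t + 1)))}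

/-- The three corners of a right triangle. -/
def RightTri.corners (T : RightTri) : Set (ℤ × ℤ) :=
  if T.orientA then {T.p, (T.p.1 + T.k, T.p.2), (T.p.1 + T.k, T.p.2 + T.k)}
  else {T.p, (T.p.1, T.p.2 + T.k), (T.p.1 + T.k, T.p.2 + T.k)}

/-- `U(𝒫)`: the subgraph of the grid formed by all segments of members of the family
that share at least one grid edge with another member, given by its set of edges. -/
def UEdges {ι : Type} (P : ι → TPath) : Set (Sym2 (ℤ × ℤ)) :=
  {e | ∃ i : ι, ∃ s : Segment (P i), e ∈ s.edges ∧
        ∃ j : ι, j ≠ i ∧ (s.edges ∩ pEdges (P j)).Nonempty}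

/-- A B₁-EPGₜ representation of a simple graph `G`: a family of at most-one-bend
paths on the triangular grid whose edge-intersection graph is `G`. -/
def IsB1EPGtRep {V : Type} (G : SimpleGraph V) (Rep : V → TPath) : Prop :=
  (∀ v, bendCount (Rep v).walk ≤ 1) ∧
  ∀ u v : V, u ≠ v → (G.Adj u v ↔ (pEdges (Rep u) ∩ pEdges (Rep v)).Nonempty)

/-!
A path with exactly one bend consists of two straight legs of different directions leaving its
bend point `b`: the leg of direction `d` is the ray from `b` with a unit step `± d`. If all
common edges of `P1` and `P2` have one direction, they lie in the leg of `P1` of that direction,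
which is a segment. Otherwise the paths share edges `e`, `e'` of two different directions. Each
of them lies on a leg of `P1` and on a leg of `P2`, so the bend point of `P2` lies on the line
through the bend `b` of `P1` in direction `edir e`, and on the one in direction `edir e'`; two
grid lines of different directions meet at most once, so both paths bend at `b`. Finally a ray
from `b` containing a given edge is determined by that edge, so the two legs of `P1` and `P2`
start with the same edges at `b`.
-/

open SimpleGraph

lemma edir_mk (u w : ℤ × ℤ) : edir s(u, w) = (|(w - u).1|, |(w - u).2|) := by
  simp [edir, abs_sub_comm]

lemma tGrid_adj_iff_adj_zero_sub {u w : ℤ × ℤ} : TGrid.Adj u w ↔ TGrid.Adj 0 (w - u) := by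
  simp [TGrid]

lemma tGrid_adj_zero_iff {v : ℤ × ℤ} :
    TGrid.Adj 0 v ↔ v = (1, 0) ∨ v = (-1, 0) ∨ v = (0, 1) ∨ v = (0, -1) ∨ v = (1, 1) ∨
      v = (-1, -1) := by
  obtain ⟨x, y⟩ := v
  simp [TGrid]

lemma eq_or_eq_neg_of_tGrid_adj_zero {v w : ℤ × ℤ} (hv : TGrid.Adj 0 v) (hw : TGrid.Adj 0 w)
    (h : (|v.1|, |v.2|) = (|w.1|, |w.2|)) : w = v ∨ w = -v := by
  rw [tGrid_adj_zero_iff] at hv hw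
  rcases hv with rfl | rfl | rfl | rfl | rfl | rfl <;>
    rcases hw with rfl | rfl | rfl | rfl | rfl | rfl <;> simp_all

lemma eq_zero_of_zsmul_eq_zsmul_of_tGrid_adj_zero {v w : ℤ × ℤ} (hv : TGrid.Adj 0 v)
    (hw : TGrid.Adj 0 w) (h : (|v.1|, |v.2|) ≠ (|w.1|, |w.2|)) {k l : ℤ}
    (hkl : k • v = l • w) : k = 0 := by
  rw [tGrid_adj_zero_iff] at hv hw
  rcases hv with rfl | rfl | rfl | rfl | rfl | rfl <;>
    rcases hw with rfl | rfl | rfl | rfl | rfl | rfl <;> simp_all <;> omega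

section Ray

variable {G : Type*} [AddCommGroup G]

def rayEdge (b v : G) (n : ℕ) : Sym2 G := s(b + n • v, b + (n + 1) • v)

lemma exists_sub_eq_zsmul_of_rayEdge_eq {b b' v v' : G} {n n' : ℕ}
    (h : rayEdge b v n = rayEdge b' v' n') : ∃ k : ℤ, b' - b = k • v := by
  rcases Sym2.eq_iff.mp h with ⟨h₁, h₂⟩ | ⟨h₁, h₂⟩
  · have hv : v' = v := by linear_combination (norm := module) h₁ - h₂
    subst hv
    exact ⟨(n : ℤ) - n', by linear_combination (norm := module) -h₁⟩
  · have hv : v' = -v := by linear_combination (norm := module) h₂ - h₁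
    subst hv
    exact ⟨(n : ℤ) + n' + 1, by linear_combination (norm := module) -h₁⟩

lemma eq_of_rayEdge_eq [IsAddTorsionFree G] {b v v' : G} {n n' : ℕ} (hv : v ≠ 0)
    (h : rayEdge b v n = rayEdge b v' n') : v' = v := by
  rcases Sym2.eq_iff.mp h with ⟨h₁, h₂⟩ | ⟨h₁, h₂⟩
  · linear_combination (norm := module) h₁ - h₂
  · have hv' : v' = -v := by linear_combination (norm := module) h₂ - h₁
    subst hv'
    have h0 : (n + n' + 1) • v = 0 := by linear_combination (norm := module) h₁
    exact absurd ((smul_eq_zero.mp h0).resolve_left (by omega)) hv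

end Ray

lemma edir_rayEdge (b v : ℤ × ℤ) (n : ℕ) : edir (rayEdge b v n) = (|v.1|, |v.2|) := by
  rw [rayEdge, edir_mk, succ_nsmul, add_sub_add_left_eq_sub, add_sub_cancel_left]

lemma tGrid_adj_zero_of_rayEdge_mem {b v : ℤ × ℤ} {n : ℕ} (h : rayEdge b v n ∈ TGrid.edgeSet) :
    TGrid.Adj 0 v := by
  rwa [rayEdge, mem_edgeSet, tGrid_adj_iff_adj_zero_sub, succ_nsmul, add_sub_add_left_eq_sub,
    add_sub_cancel_left] at h

/-- A one-bend path as the union of two rays leaving `bend`; `arm d` is the unit step of the ray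
carrying the edges of direction `d`. -/
structure OneBendShape (P : TPath) where
  bend : ℤ × ℤ
  d₁ : ℤ × ℤ
  d₂ : ℤ × ℤ
  arm : ℤ × ℤ → ℤ × ℤ
  isBendAt : IsBendAt P.walk bend
  edir_mem : ∀ e ∈ pEdges P, edir e = d₁ ∨ edir e = d₂
  exists_eq_rayEdge : ∀ e ∈ pEdges P, ∃ n : ℕ, e = rayEdge bend (arm (edir e)) n
  edges_at_bend : {e ∈ pEdges P | bend ∈ e} = (fun d => s(bend, bend + arm d)) '' {d₁, d₂}

namespace OneBendShape

variable {P P' : TPath} {e e' : Sym2 (ℤ × ℤ)}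

lemma pair_eq (S : OneBendShape P) (he : e ∈ pEdges P) (he' : e' ∈ pEdges P)
    (hne : edir e ≠ edir e') : ({S.d₁, S.d₂} : Set (ℤ × ℤ)) = {edir e, edir e'} := by
  rcases S.edir_mem e he with h | h <;> rcases S.edir_mem e' he' with h' | h' <;>
    simp only [h, h', ne_eq, not_true_eq_false] at hne ⊢
  exact Set.pair_comm _ _

lemma tGrid_adj_zero_arm (S : OneBendShape P) (he : e ∈ pEdges P) :
    TGrid.Adj 0 (S.arm (edir e)) := by
  obtain ⟨n, hn⟩ := S.exists_eq_rayEdge e he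
  exact tGrid_adj_zero_of_rayEdge_mem (hn ▸ P.walk.edges_subset_edgeSet he)

lemma edir_eq_abs_arm (S : OneBendShape P) (he : e ∈ pEdges P) :
    edir e = (|(S.arm (edir e)).1|, |(S.arm (edir e)).2|) := by
  obtain ⟨n, hn⟩ := S.exists_eq_rayEdge e he
  nth_rw 1 [hn, edir_rayEdge]

lemma bend_eq (S : OneBendShape P) (S' : OneBendShape P') (he : e ∈ pEdges P ∩ pEdges P')
    (he' : e' ∈ pEdges P ∩ pEdges P') (hne : edir e ≠ edir e') : S.bend = S'.bend := by
  obtain ⟨n, hn⟩ := S.exists_eq_rayEdge e he.1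
  obtain ⟨m, hm⟩ := S'.exists_eq_rayEdge e he.2
  obtain ⟨n', hn'⟩ := S.exists_eq_rayEdge e' he'.1
  obtain ⟨m', hm'⟩ := S'.exists_eq_rayEdge e' he'.2
  obtain ⟨k, hk⟩ := exists_sub_eq_zsmul_of_rayEdge_eq (hn.symm.trans hm)
  obtain ⟨k', hk'⟩ := exists_sub_eq_zsmul_of_rayEdge_eq (hn'.symm.trans hm')
  -- `S'.bend - S.bend` is a multiple of the steps of two non-parallel legs of `P`.
  have hk0 : k = 0 := eq_zero_of_zsmul_eq_zsmul_of_tGrid_adj_zero (S.tGrid_adj_zero_arm he.1)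
    (S.tGrid_adj_zero_arm he'.1) (by rwa [← S.edir_eq_abs_arm he.1, ← S.edir_eq_abs_arm he'.1])
    (hk.symm.trans hk')
  rw [hk0, zero_smul, sub_eq_zero] at hk
  exact hk.symm

lemma arm_eq (S : OneBendShape P) (S' : OneBendShape P') (hb : S.bend = S'.bend)
    (he : e ∈ pEdges P ∩ pEdges P') : S'.arm (edir e) = S.arm (edir e) := by
  obtain ⟨n, hn⟩ := S.exists_eq_rayEdge e he.1
  obtain ⟨m, hm⟩ := S'.exists_eq_rayEdge e he.2
  rw [← hb] at hm
  exact eq_of_rayEdge_eq (S.tGrid_adj_zero_arm he.1).ne' (hn.symm.trans hm)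

lemma edges_at_bend_eq (S : OneBendShape P) (S' : OneBendShape P')
    (he : e ∈ pEdges P ∩ pEdges P') (he' : e' ∈ pEdges P ∩ pEdges P') (hne : edir e ≠ edir e') :
    {x ∈ pEdges P | S.bend ∈ x} = {x ∈ pEdges P' | S.bend ∈ x} := by
  have hb := S.bend_eq S' he he' hne
  rw [S.edges_at_bend, hb, S'.edges_at_bend, S.pair_eq he.1 he'.1 hne, S'.pair_eq he.2 he'.2 hne]
  refine Set.image_congr ?_
  rintro d (rfl | rfl)
  · rw [S.arm_eq S' hb he]
  · rw [S.arm_eq S' hb he']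

end OneBendShape

lemma eq_of_forall_succ_eq {α : Type*} {f : ℕ → α} {a c : ℕ}
    (h : ∀ t, a ≤ t → t < c → f (t + 1) = f t) : ∀ t, a ≤ t → t ≤ c → f t = f a := by
  intro t hat htc
  induction t, hat using Nat.le_induction with
  | base => rfl
  | succ t hat ih => rw [h t hat (by omega), ih (by omega)]

lemma eq_add_nsmul_of_forall_sub_eq {G : Type*} [AddCommGroup G] {f : ℕ → G} {a c : ℕ} {v : G}
    (h : ∀ t, a ≤ t → t < c → f (t + 1) - f t = v) :
    ∀ t, a ≤ t → t ≤ c → f t = f a + (t - a) • v := by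
  intro t hat htc
  induction t, hat using Nat.le_induction with
  | base => simp
  | succ t hat ih =>
    rw [← sub_add_cancel (f (t + 1)) (f t), h t hat (by omega), ih (by omega),
      Nat.sub_add_comm hat, succ_nsmul]
    abel

lemma mem_edges_iff_exists_wEdge {u v : ℤ × ℤ} {p : TGrid.Walk u v} {e : Sym2 (ℤ × ℤ)} :
    e ∈ p.edges ↔ ∃ t < p.length, wEdge p t = e := by
  induction e using Sym2.ind
  exact Walk.mk_mem_edges_iff_exists p

def wStep {u v : ℤ × ℤ} (p : TGrid.Walk u v) (t : ℕ) : ℤ × ℤ := p.getVert (t + 1) - p.getVert t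

lemma tGrid_adj_zero_wStep {u v : ℤ × ℤ} {p : TGrid.Walk u v} {t : ℕ} (ht : t < p.length) :
    TGrid.Adj 0 (wStep p t) :=
  tGrid_adj_iff_adj_zero_sub.mp (p.adj_getVert_succ ht)

lemma edir_wEdge {u v : ℤ × ℤ} (p : TGrid.Walk u v) (t : ℕ) :
    edir (wEdge p t) = (|(wStep p t).1|, |(wStep p t).2|) :=
  edir_mk _ _

lemma wStep_succ_eq_of_edir_eq {u v : ℤ × ℤ} {p : TGrid.Walk u v} (hp : p.IsPath) {t : ℕ}
    (ht : t + 2 ≤ p.length) (h : edir (wEdge p t) = edir (wEdge p (t + 1))) :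
    wStep p (t + 1) = wStep p t := by
  rw [edir_wEdge, edir_wEdge] at h
  refine (eq_or_eq_neg_of_tGrid_adj_zero (tGrid_adj_zero_wStep (by omega))
    (tGrid_adj_zero_wStep (by omega)) h).resolve_right fun hneg => ?_
  have hback : p.getVert (t + 2) = p.getVert t := by
    simp only [wStep, neg_sub] at hneg
    rw [← sub_add_cancel (p.getVert (t + 2)) (p.getVert (t + 1)), hneg, sub_add_cancel]
  have := hp.getVert_injOn (by simp only [Set.mem_ofPred_eq]; omega)
    (by simp only [Set.mem_ofPred_eq]; omega) hback
  omega

structure IsUniqueBendIndex {u v : ℤ × ℤ} (p : TGrid.Walk u v) (i : ℕ) : Prop where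
  add_two_le : i + 2 ≤ p.length
  edir_ne : edir (wEdge p i) ≠ edir (wEdge p (i + 1))
  edir_eq : ∀ t, t + 2 ≤ p.length → t ≠ i → edir (wEdge p t) = edir (wEdge p (t + 1))

lemma exists_isUniqueBendIndex {u v : ℤ × ℤ} {p : TGrid.Walk u v} (h : bendCount p = 1) :
    ∃ i, IsUniqueBendIndex p i := by
  rw [bendCount, List.countP_eq_length_filter, List.length_eq_one_iff] at h
  obtain ⟨i, hi⟩ := h
  have hmem : ∀ t, (t + 2 ≤ p.length ∧ edir (wEdge p t) ≠ edir (wEdge p (t + 1))) ↔ t = i := by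
    intro t
    rw [← List.mem_singleton, ← hi, List.mem_filter, List.mem_range, decide_eq_true_iff]
    exact and_congr_left' (by omega)
  obtain ⟨hlen, hbend⟩ := (hmem i).mpr rfl
  exact ⟨i, hlen, hbend, fun t ht hti => not_not.mp fun hne => hti ((hmem t).mp ⟨ht, hne⟩)⟩

namespace IsUniqueBendIndex

section Walk

variable {u v : ℤ × ℤ} {p : TGrid.Walk u v} {i t : ℕ}

lemma eq_of_le {α : Type*} {f : ℕ → α} (hi : IsUniqueBendIndex p i)
    (hf : ∀ s, s + 2 ≤ p.length → edir (wEdge p s) = edir (wEdge p (s + 1)) → f (s + 1) = f s)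
    (ht : t ≤ i) : f t = f 0 :=
  eq_of_forall_succ_eq (fun s _ hs => hf s (by linarith [hi.add_two_le])
    (hi.edir_eq s (by linarith [hi.add_two_le]) (by omega))) t (Nat.zero_le _) ht

lemma eq_of_lt {α : Type*} {f : ℕ → α} (hi : IsUniqueBendIndex p i)
    (hf : ∀ s, s + 2 ≤ p.length → edir (wEdge p s) = edir (wEdge p (s + 1)) → f (s + 1) = f s)
    (ht : i < t) (htL : t < p.length) : f t = f (i + 1) :=
  eq_of_forall_succ_eq (c := p.length - 1) (fun s hs hsL => hf s (by omega)
    (hi.edir_eq s (by omega) (by omega))) t ht (by omega)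

lemma edir_eq_of_le (hi : IsUniqueBendIndex p i) (ht : t ≤ i) :
    edir (wEdge p t) = edir (wEdge p 0) :=
  hi.eq_of_le (f := fun t => edir (wEdge p t)) (fun _ _ h => h.symm) ht

lemma edir_eq_of_lt (hi : IsUniqueBendIndex p i) (ht : i < t) (htL : t < p.length) :
    edir (wEdge p t) = edir (wEdge p (i + 1)) :=
  hi.eq_of_lt (f := fun t => edir (wEdge p t)) (fun _ _ h => h.symm) ht htL

lemma edir_zero_ne (hi : IsUniqueBendIndex p i) :
    edir (wEdge p 0) ≠ edir (wEdge p (i + 1)) :=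
  hi.edir_eq_of_le le_rfl ▸ hi.edir_ne

lemma wStep_eq_of_le (hi : IsUniqueBendIndex p i) (hp : p.IsPath) (ht : t ≤ i) :
    wStep p t = wStep p 0 :=
  hi.eq_of_le (fun _ hs h => wStep_succ_eq_of_edir_eq hp hs h) ht

lemma wStep_eq_of_lt (hi : IsUniqueBendIndex p i) (hp : p.IsPath) (ht : i < t)
    (htL : t < p.length) : wStep p t = wStep p (i + 1) :=
  hi.eq_of_lt (fun _ hs h => wStep_succ_eq_of_edir_eq hp hs h) ht htL

lemma getVert_eq_of_le (hi : IsUniqueBendIndex p i) (hp : p.IsPath) (ht : t ≤ i + 1) :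
    p.getVert t = p.getVert (i + 1) + (i + 1 - t) • -wStep p 0 := by
  have h := eq_add_nsmul_of_forall_sub_eq (f := p.getVert) (c := i + 1)
    (fun s _ hs => hi.wStep_eq_of_le hp (by omega)) (i + 1) ht le_rfl
  rw [h, smul_neg, add_neg_cancel_right]

lemma getVert_eq_of_ge (hi : IsUniqueBendIndex p i) (hp : p.IsPath) (ht : i + 1 ≤ t)
    (htL : t ≤ p.length) : p.getVert t = p.getVert (i + 1) + (t - (i + 1)) • wStep p (i + 1) :=
  eq_add_nsmul_of_forall_sub_eq (fun s hs hsL => hi.wStep_eq_of_lt hp (by omega) hsL) t ht htL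

lemma wEdge_eq_of_le (hi : IsUniqueBendIndex p i) (hp : p.IsPath) (ht : t ≤ i) :
    wEdge p t = rayEdge (p.getVert (i + 1)) (-wStep p 0) (i - t) := by
  rw [wEdge, rayEdge, hi.getVert_eq_of_le (t := t) hp (by omega),
    hi.getVert_eq_of_le (t := t + 1) hp (by omega),
    Sym2.eq_swap, show i + 1 - t = i - t + 1 by omega, show i + 1 - (t + 1) = i - t by omega]

lemma wEdge_eq_of_lt (hi : IsUniqueBendIndex p i) (hp : p.IsPath) (ht : i < t)
    (htL : t < p.length) :
    wEdge p t = rayEdge (p.getVert (i + 1)) (wStep p (i + 1)) (t - (i + 1)) := by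
  rw [wEdge, rayEdge, hi.getVert_eq_of_ge (t := t) hp (by omega) (by omega),
    hi.getVert_eq_of_ge (t := t + 1) hp (by omega) (by omega),
    show t + 1 - (i + 1) = t - (i + 1) + 1 by omega]

end Walk

variable {P : TPath} {i : ℕ}

lemma exists_segment (hi : IsUniqueBendIndex P.walk i) {e₀ : Sym2 (ℤ × ℤ)}
    (he₀ : e₀ ∈ pEdges P) : ∃ s : Segment P, {e ∈ pEdges P | edir e = edir e₀} ⊆ s.edges := by
  have hlen := hi.add_two_le
  obtain ⟨t₀, ht₀, rfl⟩ := mem_edges_iff_exists_wEdge.mp he₀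
  rcases le_or_gt t₀ i with h₀ | h₀
  · refine ⟨⟨0, i + 1, by omega, by omega, fun t _ ht => hi.edir_eq_of_le (by omega), Or.inl rfl,
      Or.inr (by simpa using hi.edir_ne)⟩, ?_⟩
    rintro _ ⟨he, hdir⟩
    obtain ⟨t, ht, rfl⟩ := mem_edges_iff_exists_wEdge.mp he
    refine ⟨t, Nat.zero_le _, Nat.lt_succ_of_le (not_lt.mp fun hti => hi.edir_zero_ne ?_), rfl⟩
    rw [← hi.edir_eq_of_lt hti ht, hdir, hi.edir_eq_of_le h₀]
  · refine ⟨⟨i + 1, P.walk.length, by omega, le_rfl,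
      fun t ht htL => hi.edir_eq_of_lt (by omega) htL,
      Or.inr (by simpa [Ne.symm] using hi.edir_ne), Or.inl rfl⟩, ?_⟩
    rintro _ ⟨he, hdir⟩
    obtain ⟨t, ht, rfl⟩ := mem_edges_iff_exists_wEdge.mp he
    refine ⟨t, Nat.succ_le_of_lt (lt_of_not_ge fun hti => hi.edir_zero_ne ?_), ht, rfl⟩
    rw [← hi.edir_eq_of_le hti, hdir, hi.edir_eq_of_lt h₀ ht₀]

lemma edges_at_bend_eq_pair (hi : IsUniqueBendIndex P.walk i) :
    {e ∈ pEdges P | P.walk.getVert (i + 1) ∈ e} = {wEdge P.walk i, wEdge P.walk (i + 1)} := by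
  have hlen := hi.add_two_le
  have hinj := P.isPath.getVert_injOn
  ext e
  constructor
  · rintro ⟨he, hb⟩
    obtain ⟨t, ht, rfl⟩ := mem_edges_iff_exists_wEdge.mp he
    rcases Sym2.mem_iff.mp hb with hb | hb
    · have : i + 1 = t := hinj (by simp only [Set.mem_ofPred_eq]; omega)
        (by simp only [Set.mem_ofPred_eq]; omega) hb
      exact Or.inr (by rw [this]; rfl)
    · have : i + 1 = t + 1 := hinj (by simp only [Set.mem_ofPred_eq]; omega)
        (by simp only [Set.mem_ofPred_eq]; omega) hb
      exact Or.inl (by rw [show t = i by omega])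
  · rintro (rfl | rfl)
    · exact ⟨mem_edges_iff_exists_wEdge.mpr ⟨i, by omega, rfl⟩, Sym2.mem_mk_right _ _⟩
    · exact ⟨mem_edges_iff_exists_wEdge.mpr ⟨i + 1, by omega, rfl⟩, Sym2.mem_mk_left _ _⟩

def oneBendShape (hi : IsUniqueBendIndex P.walk i) : OneBendShape P where
  bend := P.walk.getVert (i + 1)
  d₁ := edir (wEdge P.walk 0)
  d₂ := edir (wEdge P.walk (i + 1))
  arm d := if d = edir (wEdge P.walk 0) then -wStep P.walk 0 else wStep P.walk (i + 1)
  isBendAt := ⟨i, hi.add_two_le, rfl, hi.edir_ne⟩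
  edir_mem e he := by
    obtain ⟨t, ht, rfl⟩ := mem_edges_iff_exists_wEdge.mp he
    rcases le_or_gt t i with hti | hti
    exacts [Or.inl (hi.edir_eq_of_le hti), Or.inr (hi.edir_eq_of_lt hti ht)]
  exists_eq_rayEdge e he := by
    obtain ⟨t, ht, rfl⟩ := mem_edges_iff_exists_wEdge.mp he
    rcases le_or_gt t i with hti | hti
    · rw [if_pos (hi.edir_eq_of_le hti)]
      exact ⟨i - t, hi.wEdge_eq_of_le P.isPath hti⟩
    · rw [if_neg (hi.edir_eq_of_lt hti ht ▸ hi.edir_zero_ne.symm)]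
      exact ⟨t - (i + 1), hi.wEdge_eq_of_lt P.isPath hti ht⟩
  edges_at_bend := by
    have hlen := hi.add_two_le
    rw [hi.edges_at_bend_eq_pair, Set.image_pair, if_pos rfl, if_neg hi.edir_zero_ne.symm,
      hi.wEdge_eq_of_le P.isPath le_rfl, hi.wEdge_eq_of_lt P.isPath (by omega) (by omega)]
    simp [rayEdge]

end IsUniqueBendIndex

/-- If two exactly-one-bend paths on the triangular grid share an
edge, then either their edge intersection is contained in a single segment of one
of them, or they have the same bend point and the same pair of edges incident to it. -/
theorem stmt1 (P1 P2 : TPath)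
    (h1 : bendCount P1.walk = 1) (h2 : bendCount P2.walk = 1)
    (hint : (pEdges P1 ∩ pEdges P2).Nonempty) :
    (∃ s : Segment P1, pEdges P1 ∩ pEdges P2 ⊆ s.edges) ∨
    (∃ s : Segment P2, pEdges P1 ∩ pEdges P2 ⊆ s.edges) ∨
    (∃ b : ℤ × ℤ, IsBendAt P1.walk b ∧ IsBendAt P2.walk b ∧
      {e ∈ pEdges P1 | b ∈ e} = {e ∈ pEdges P2 | b ∈ e}) := by
  obtain ⟨i₁, hi₁⟩ := exists_isUniqueBendIndex h1
  obtain ⟨i₂, hi₂⟩ := exists_isUniqueBendIndex h2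
  obtain ⟨e₀, he₀⟩ := hint
  by_cases hdir : ∀ e ∈ pEdges P1 ∩ pEdges P2, edir e = edir e₀
  · obtain ⟨s, hs⟩ := hi₁.exists_segment he₀.1
    exact Or.inl ⟨s, fun e he => hs ⟨he.1, hdir e he⟩⟩
  · push Not at hdir
    obtain ⟨e', he', hne⟩ := hdir
    let S₁ := hi₁.oneBendShape
    let S₂ := hi₂.oneBendShape
    refine Or.inr (Or.inr ⟨S₁.bend, S₁.isBendAt, ?_, S₁.edges_at_bend_eq S₂ he₀ he' hne.symm⟩)
    exact S₁.bend_eq S₂ he₀ he' hne.symm ▸ S₂.isBendAt
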